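/- arXiv:1803.02546 — 5 statements merged into one kernel-verified Lean document; each statement's English description precedes it below -/
import Mathlib

section
/- Let u : ℝ → ℝ be twice continuously differentiable with u' > 0 and u'' < 0, let ħ : [0,1] → ℝ be nonnegative and continuous, let φ : [0,1] → ℝ be increasing and continuously differentiable with φ(0) = 0, let λ > 0 and β ∈ ℝ with u'(β) in the range of u'. Suppose δ ∈ C²[0,1] is concave and satisfies the free boundary problem min{ δ''(p) − ħ(p)·u''((u')⁻¹(δ'(p))), λφ(p) − δ(p) } = 0 for a.e. p ∈ [0,1], with boundary conditions δ(0) = 0 and δ'(1) = u'(β) (in particular δ'(p) lies in the range of u' for all p). Define Q̄(p) := (u')⁻¹(δ'(p)). Then Q̄ belongs to the class 𝒬 of absolutely continuous functions Q on [0,1] with Q(1) = β and 0 ≤ Q' ≤ ħ a.e., and for every Q ∈ 𝒬 one has ∫₀¹ ( u(Q(p)) − λ Q(p) φ'(p) ) dp ≤ ∫₀¹ ( u(Q̄(p)) − λ Q̄(p) φ'(p) ) dp; that is, Q̄ maximizes the Lagrangian functional over 𝒬. -/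
/-!
Since `δ` is concave and `u'` is decreasing, `Q̄ = (u')⁻¹ ∘ δ'` is nondecreasing, with
`Q̄' = δ'' / u''(Q̄)`; the differential part of the free-boundary condition, `δ'' ≥ ħ u''(Q̄)`,
caps this slope by `ħ`, so `Q̄ ∈ 𝒬`.

For optimality, concavity of `u` and `u'(Q̄) = δ'` give `L(Q) ≤ L(Q̄) + ∫ G' (Q - Q̄)` with
`G = δ - λφ`. Since `G(0) = 0` and `(Q - Q̄)(1) = 0`, integration by parts turns the remainder
into `∫ G (Q̄' - Q')`. This is `≤ 0`: the obstacle part of the condition gives `G ≤ 0`, and where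
`G < 0` the differential part holds with equality, forcing `Q̄' = ħ ≥ Q'`.
-/

open MeasureTheory Set

/-- A function `Q` is absolutely continuous on `[0,1]` with a.e. derivative `Q'`,
encoded via the fundamental theorem of calculus representation. -/
def AbsContOn01 (Q Q' : ℝ → ℝ) : Prop :=
  MeasureTheory.IntegrableOn Q' (Set.Icc 0 1) ∧
    ∀ p ∈ Set.Icc (0 : ℝ) 1, Q p = Q 0 + ∫ t in (0 : ℝ)..p, Q' t

/-- Membership in the admissible class `𝒬`: absolutely continuous on `[0,1]`,
terminal value `β`, and `0 ≤ Q' ≤ hbar` a.e. on `[0,1]`. -/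
def MemQ (β : ℝ) (hbar : ℝ → ℝ) (Q Q' : ℝ → ℝ) : Prop :=
  AbsContOn01 Q Q' ∧ Q 1 = β ∧
    (∀ᵐ p ∂(MeasureTheory.volume.restrict (Set.Icc (0 : ℝ) 1)),
      0 ≤ Q' p ∧ Q' p ≤ hbar p)

open Filter

theorem ConcaveOn.le_add_deriv_mul_sub {f : ℝ → ℝ} (hf : ConcaveOn ℝ univ f) {y : ℝ}
    (hd : DifferentiableAt ℝ f y) (x : ℝ) : f x ≤ f y + deriv f y * (x - y) := by
  rcases lt_trichotomy x y with hxy | rfl | hxy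
  · have h := hf.deriv_le_slope trivial trivial hxy hd
    rw [slope_def_field, le_div_iff₀ (sub_pos.2 hxy)] at h
    linarith
  · simp
  · have h := hf.slope_le_deriv trivial trivial hxy hd
    rw [slope_def_field, div_le_iff₀ (sub_pos.2 hxy)] at h
    linarith

theorem HasDerivWithinAt.invFun_comp {f g : ℝ → ℝ} {g' x : ℝ} {s : Set ℝ}
    (hf : ContDiff ℝ 1 f) (hinj : f.Injective) (hg : HasDerivWithinAt g g' s x)
    (hx : g x ∈ range f) (hf' : deriv f (Function.invFun f (g x)) ≠ 0) :
    HasDerivWithinAt (fun p => Function.invFun f (g p))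
      (g' / deriv f (Function.invFun f (g x))) s x := by
  obtain ⟨y, hy⟩ := hx
  rw [← hy, Function.leftInverse_invFun hinj y] at hf' ⊢
  have hinv : HasDerivAt (Function.invFun f) (deriv f y)⁻¹ (f y) :=
    ((hf.contDiffAt.hasStrictDerivAt one_ne_zero).to_local_left_inverse hf'
      (Eventually.of_forall (Function.leftInverse_invFun hinj))).hasDerivAt
  rw [hy] at hinv
  rw [div_eq_inv_mul]
  exact hinv.comp_hasDerivWithinAt x hg

namespace AbsContOn01

variable {f f' g g' : ℝ → ℝ}

theorem of_hasDerivWithinAt (hf' : ContinuousOn f' (Icc 0 1))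
    (hf : ∀ p ∈ Icc (0 : ℝ) 1, HasDerivWithinAt f (f' p) (Icc 0 1) p) : AbsContOn01 f f' := by
  refine ⟨hf'.integrableOn_Icc, fun p hp => ?_⟩
  have hsub : Icc 0 p ⊆ Icc (0 : ℝ) 1 := Icc_subset_Icc_right hp.2
  rw [intervalIntegral.integral_eq_sub_of_hasDerivAt_of_le hp.1
    (fun x hx => (hf x (hsub hx)).continuousWithinAt.mono hsub)
    (fun x hx => (hf x (hsub (Ioo_subset_Icc_self hx))).hasDerivAt
      (Icc_mem_nhds hx.1 (hx.2.trans_le hp.2)))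
    ((hf'.mono hsub).intervalIntegrable_of_Icc hp.1)]
  ring

theorem intervalIntegrable (hf : AbsContOn01 f f') {a b : ℝ} (ha : a ∈ Icc (0 : ℝ) 1)
    (hb : b ∈ Icc (0 : ℝ) 1) : IntervalIntegrable f' volume a b :=
  (hf.1.mono_set (uIcc_subset_Icc ha hb)).intervalIntegrable

theorem sub (hf : AbsContOn01 f f') (hg : AbsContOn01 g g') : AbsContOn01 (f - g) (f' - g') := by
  refine ⟨hf.1.sub hg.1, fun p hp => ?_⟩
  have h0 : (0 : ℝ) ∈ Icc (0 : ℝ) 1 := left_mem_Icc.2 zero_le_one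
  simp only [Pi.sub_apply]
  rw [hf.2 p hp, hg.2 p hp,
    intervalIntegral.integral_sub (hf.intervalIntegrable h0 hp) (hg.intervalIntegrable h0 hp)]
  ring

theorem absolutelyContinuousOnInterval (hf : AbsContOn01 f f') :
    AbsolutelyContinuousOnInterval f 0 1 := by
  have h01 : uIcc (0 : ℝ) 1 = Icc 0 1 := uIcc_of_le zero_le_one
  have hF := (hf.intervalIntegrable (left_mem_Icc.2 zero_le_one)
    (right_mem_Icc.2 zero_le_one)).absolutelyContinuousOnInterval_intervalIntegral
    (c := 0) left_mem_uIcc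
  refine Tendsto.congr' (eventually_inf_principal.2 (Eventually.of_forall fun E hE =>
    Finset.sum_congr rfl fun i hi => ?_)) hF
  have hmem := hE.1 i hi
  rw [h01] at hmem
  rw [hf.2 _ hmem.1, hf.2 _ hmem.2, dist_add_left]

theorem continuousOn (hf : AbsContOn01 f f') : ContinuousOn f (Icc 0 1) := by
  simpa [uIcc_of_le zero_le_one] using hf.absolutelyContinuousOnInterval.continuousOn

theorem ae_deriv_eq (hf : AbsContOn01 f f') :
    ∀ᵐ p ∂volume.restrict (Icc 0 1), deriv f p = f' p := by
  rw [← Measure.restrict_congr_set Ioo_ae_eq_Icc, ae_restrict_iff' measurableSet_Ioo]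
  filter_upwards [(hf.intervalIntegrable (left_mem_Icc.2 zero_le_one)
    (right_mem_Icc.2 zero_le_one)).ae_hasDerivAt_integral] with p hderiv hp
  have hp' : p ∈ uIcc (0 : ℝ) 1 := by
    rw [uIcc_of_le zero_le_one]; exact Ioo_subset_Icc_self hp
  refine (((hderiv hp' 0 left_mem_uIcc).const_add (f 0)).congr_of_eventuallyEq ?_).deriv
  filter_upwards [Icc_mem_nhds hp.1 hp.2] with x hx using hf.2 x hx

theorem integral_mul_eq_sub (hf : AbsContOn01 f f') (hg : AbsContOn01 g g') :
    ∫ p in Icc 0 1, f p * g' p = f 1 * g 1 - f 0 * g 0 - ∫ p in Icc 0 1, f' p * g p := by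
  have hgderiv : ∫ p in Icc 0 1, f p * g' p = ∫ p in Icc 0 1, f p * deriv g p :=
    integral_congr_ae (by filter_upwards [hg.ae_deriv_eq] with p hp; rw [hp])
  have hfderiv : ∫ p in Icc 0 1, f' p * g p = ∫ p in Icc 0 1, deriv f p * g p :=
    integral_congr_ae (by filter_upwards [hf.ae_deriv_eq] with p hp; rw [hp])
  rw [hgderiv, hfderiv, integral_Icc_eq_integral_Ioc, integral_Icc_eq_integral_Ioc,
    ← intervalIntegral.integral_of_le zero_le_one, ← intervalIntegral.integral_of_le zero_le_one]
  exact hf.absolutelyContinuousOnInterval.integral_mul_deriv_eq_deriv_mul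
    hg.absolutelyContinuousOnInterval

end AbsContOn01

theorem integral_deriv_mul_sub_nonpos {G G' Q Q' R R' hbar : ℝ → ℝ}
    (hG : AbsContOn01 G G') (hG0 : G 0 = 0) (hQ : AbsContOn01 Q Q') (hR : AbsContOn01 R R')
    (hQR : Q 1 = R 1) (hQ' : ∀ᵐ p ∂volume.restrict (Icc 0 1), Q' p ≤ hbar p)
    (hG_nonpos : ∀ᵐ p ∂volume.restrict (Icc 0 1), G p ≤ 0)
    (hR' : ∀ᵐ p ∂volume.restrict (Icc 0 1), G p < 0 → R' p = hbar p) :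
    ∫ p in Icc 0 1, G' p * (Q p - R p) ≤ 0 := by
  have hparts := hG.integral_mul_eq_sub (hQ.sub hR)
  simp only [Pi.sub_apply, hQR, hG0, sub_self, mul_zero, zero_mul, zero_sub] at hparts
  have hpos : 0 ≤ ∫ p in Icc 0 1, G p * (Q' p - R' p) := by
    refine integral_nonneg_of_ae ?_
    filter_upwards [hQ', hG_nonpos, hR'] with p hQ'p hGp hR'p
    rcases hGp.lt_or_eq with hlt | heq
    · exact mul_nonneg_of_nonpos_of_nonpos hGp (by linarith [hR'p hlt])
    · simp [heq]
  linarith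

noncomputable def qbar (u δ : ℝ → ℝ) (p : ℝ) : ℝ :=
  Function.invFun (deriv u) (derivWithin δ (Icc 0 1) p)

noncomputable def qbarDeriv (u δ : ℝ → ℝ) (p : ℝ) : ℝ :=
  derivWithin (derivWithin δ (Icc 0 1)) (Icc 0 1) p / deriv (deriv u) (qbar u δ p)

noncomputable def lagrangian (u φ : ℝ → ℝ) (lam : ℝ) (Q : ℝ → ℝ) : ℝ :=
  ∫ p in Icc 0 1, (u (Q p) - lam * Q p * derivWithin φ (Icc 0 1) p)

theorem lagrangian_le_add_integral {u φ Q R d : ℝ → ℝ} {lam : ℝ} (hu : ConcaveOn ℝ univ u)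
    (hud : Differentiable ℝ u) (hφ : ContinuousOn (derivWithin φ (Icc 0 1)) (Icc 0 1))
    (hQ : ContinuousOn Q (Icc 0 1)) (hR : ContinuousOn R (Icc 0 1))
    (hd : ContinuousOn d (Icc 0 1)) (hRd : ∀ p ∈ Icc (0 : ℝ) 1, deriv u (R p) = d p) :
    lagrangian u φ lam Q ≤ lagrangian u φ lam R +
      ∫ p in Icc 0 1, (d p - lam * derivWithin φ (Icc 0 1) p) * (Q p - R p) := by
  have hint : ∀ S : ℝ → ℝ, ContinuousOn S (Icc 0 1) →
      IntegrableOn (fun p => u (S p) - lam * S p * derivWithin φ (Icc 0 1) p) (Icc 0 1) :=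
    fun S hS => ((hud.continuous.comp_continuousOn hS).sub
      ((continuousOn_const.mul hS).mul hφ)).integrableOn_Icc
  have hrem : IntegrableOn (fun p => (d p - lam * derivWithin φ (Icc 0 1) p) * (Q p - R p))
      (Icc 0 1) := ((hd.sub (continuousOn_const.mul hφ)).mul (hQ.sub hR)).integrableOn_Icc
  rw [lagrangian, lagrangian, ← integral_add (hint R hR) hrem]
  refine setIntegral_mono_on (hint Q hQ) ((hint R hR).add hrem) measurableSet_Icc fun p hp => ?_
  have htangent := hu.le_add_deriv_mul_sub (hud (R p)) (Q p)
  rw [hRd p hp] at htangent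
  linear_combination htangent

section FreeBoundary

variable {u δ : ℝ → ℝ}

theorem contDiffOn_derivWithin_Icc (hδ : ContDiffOn ℝ 2 δ (Icc 0 1)) :
    ContDiffOn ℝ 1 (derivWithin δ (Icc 0 1)) (Icc 0 1) :=
  hδ.derivWithin (uniqueDiffOn_Icc zero_lt_one) (by norm_num)

theorem hasDerivWithinAt_qbar (hu : ContDiff ℝ 2 u) (hu'' : ∀ x, deriv (deriv u) x < 0)
    (hδ : ContDiffOn ℝ 2 δ (Icc 0 1))
    (hrange : ∀ p ∈ Icc (0 : ℝ) 1, derivWithin δ (Icc 0 1) p ∈ range (deriv u))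
    {p : ℝ} (hp : p ∈ Icc (0 : ℝ) 1) :
    HasDerivWithinAt (qbar u δ) (qbarDeriv u δ p) (Icc 0 1) p :=
  (((contDiffOn_derivWithin_Icc hδ).differentiableOn one_ne_zero p hp).hasDerivWithinAt).invFun_comp
    (hu.deriv' (n := 1)) (strictAnti_of_deriv_neg hu'').injective (hrange p hp) (hu'' _).ne

theorem continuousOn_qbarDeriv (hu : ContDiff ℝ 2 u) (hu'' : ∀ x, deriv (deriv u) x < 0)
    (hδ : ContDiffOn ℝ 2 δ (Icc 0 1))
    (hrange : ∀ p ∈ Icc (0 : ℝ) 1, derivWithin δ (Icc 0 1) p ∈ range (deriv u)) :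
    ContinuousOn (qbarDeriv u δ) (Icc 0 1) := by
  have hqbar : ContinuousOn (qbar u δ) (Icc 0 1) := fun p hp =>
    (hasDerivWithinAt_qbar hu hu'' hδ hrange hp).continuousWithinAt
  exact ((contDiffOn_derivWithin_Icc hδ).continuousOn_derivWithin
    (uniqueDiffOn_Icc zero_lt_one) le_rfl).div
    (((hu.deriv' (n := 1)).continuous_deriv le_rfl).comp_continuousOn hqbar) fun p _ => (hu'' _).ne

theorem qbarDeriv_nonneg (hu'' : ∀ x, deriv (deriv u) x < 0) (hδ : ContDiffOn ℝ 2 δ (Icc 0 1))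
    (hconc : ConcaveOn ℝ (Icc 0 1) δ) (p : ℝ) : 0 ≤ qbarDeriv u δ p :=
  div_nonneg_of_nonpos
    (hconc.antitoneOn_derivWithin (hδ.differentiableOn (by norm_num))).derivWithin_nonpos
    (hu'' _).le

theorem memQ_qbar {hbar : ℝ → ℝ} {β : ℝ} (hu : ContDiff ℝ 2 u)
    (hu'' : ∀ x, deriv (deriv u) x < 0) (hδ : ContDiffOn ℝ 2 δ (Icc 0 1))
    (hconc : ConcaveOn ℝ (Icc 0 1) δ)
    (hrange : ∀ p ∈ Icc (0 : ℝ) 1, derivWithin δ (Icc 0 1) p ∈ range (deriv u))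
    (hδ'1 : derivWithin δ (Icc 0 1) 1 = deriv u β)
    (hbound : ∀ᵐ p ∂volume.restrict (Icc 0 1), qbarDeriv u δ p ≤ hbar p) :
    MemQ β hbar (qbar u δ) (qbarDeriv u δ) := by
  refine ⟨AbsContOn01.of_hasDerivWithinAt (continuousOn_qbarDeriv hu hu'' hδ hrange)
    fun p hp => hasDerivWithinAt_qbar hu hu'' hδ hrange hp, ?_, ?_⟩
  · rw [qbar, hδ'1]
    exact Function.leftInverse_invFun (strictAnti_of_deriv_neg hu'').injective β
  · filter_upwards [hbound] with p hp using ⟨qbarDeriv_nonneg hu'' hδ hconc p, hp⟩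

theorem lagrangian_le_lagrangian_qbar {φ Q Q' hbar : ℝ → ℝ} {lam β : ℝ} (hu : ContDiff ℝ 2 u)
    (hu'' : ∀ x, deriv (deriv u) x < 0) (hφ : ContDiffOn ℝ 1 φ (Icc 0 1)) (hφ0 : φ 0 = 0)
    (hδ : ContDiffOn ℝ 2 δ (Icc 0 1))
    (hrange : ∀ p ∈ Icc (0 : ℝ) 1, derivWithin δ (Icc 0 1) p ∈ range (deriv u))
    (hδ0 : δ 0 = 0) (hqbar : MemQ β hbar (qbar u δ) (qbarDeriv u δ))
    (hobstacle : ∀ᵐ p ∂volume.restrict (Icc 0 1), δ p - lam * φ p ≤ 0)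
    (hslack : ∀ᵐ p ∂volume.restrict (Icc 0 1), δ p - lam * φ p < 0 → qbarDeriv u δ p = hbar p)
    (hQ : MemQ β hbar Q Q') :
    lagrangian u φ lam Q ≤ lagrangian u φ lam (qbar u δ) := by
  have hud : Differentiable ℝ u := hu.differentiable (by norm_num)
  have hd := contDiffOn_derivWithin_Icc hδ
  have hφ' : ContinuousOn (derivWithin φ (Icc 0 1)) (Icc 0 1) :=
    hφ.continuousOn_derivWithin (uniqueDiffOn_Icc zero_lt_one) le_rfl
  have hG : AbsContOn01 (fun p => δ p - lam * φ p)
      (fun p => derivWithin δ (Icc 0 1) p - lam * derivWithin φ (Icc 0 1) p) :=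
    .of_hasDerivWithinAt (hd.continuousOn.sub (continuousOn_const.mul hφ')) fun p hp =>
      ((hδ.differentiableOn (by norm_num) p hp).hasDerivWithinAt).sub
        (((hφ.differentiableOn one_ne_zero p hp).hasDerivWithinAt).const_mul lam)
  have hconc : ConcaveOn ℝ univ u :=
    (strictAnti_of_deriv_neg hu'').antitone.concaveOn_univ_of_deriv hud
  have hfirst := lagrangian_le_add_integral (lam := lam) hconc hud hφ' hQ.1.continuousOn
    hqbar.1.continuousOn hd.continuousOn fun p hp => Function.invFun_eq (hrange p hp)
  have hdual := integral_deriv_mul_sub_nonpos hG (by simp [hδ0, hφ0]) hQ.1 hqbar.1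
    (hQ.2.1.trans hqbar.2.1.symm) (hQ.2.2.mono fun _ hp => hp.2) hobstacle hslack
  linarith

end FreeBoundary

theorem quantile_optimization_main_general
    (u : ℝ → ℝ) (hu : ContDiff ℝ 2 u)
    (hu'' : ∀ x, deriv (deriv u) x < 0)
    (hbar : ℝ → ℝ)
    (φ : ℝ → ℝ)
    (hφC1 : ContDiffOn ℝ 1 φ (Set.Icc 0 1)) (hφ0 : φ 0 = 0)
    (lam β : ℝ)
    (δ : ℝ → ℝ) (hδC2 : ContDiffOn ℝ 2 δ (Set.Icc 0 1))
    (hδconc : ConcaveOn ℝ (Set.Icc 0 1) δ)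
    (hrange : ∀ p ∈ Set.Icc (0 : ℝ) 1,
      derivWithin δ (Set.Icc 0 1) p ∈ Set.range (deriv u))
    (hFBP : ∀ᵐ p ∂(MeasureTheory.volume.restrict (Set.Icc (0 : ℝ) 1)),
      min (derivWithin (derivWithin δ (Set.Icc 0 1)) (Set.Icc 0 1) p -
            hbar p * deriv (deriv u)
              (Function.invFun (deriv u) (derivWithin δ (Set.Icc 0 1) p)))
          (lam * φ p - δ p) = 0)
    (hδ0 : δ 0 = 0)
    (hδ'1 : derivWithin δ (Set.Icc 0 1) 1 = deriv u β) :
    (∃ Qb', MemQ β hbar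
        (fun p => Function.invFun (deriv u) (derivWithin δ (Set.Icc 0 1) p)) Qb') ∧
      ∀ Q Q', MemQ β hbar Q Q' →
        (∫ p in Set.Icc (0 : ℝ) 1,
            (u (Q p) - lam * Q p * derivWithin φ (Set.Icc 0 1) p)) ≤
          ∫ p in Set.Icc (0 : ℝ) 1,
            (u (Function.invFun (deriv u) (derivWithin δ (Set.Icc 0 1) p)) -
              lam * Function.invFun (deriv u) (derivWithin δ (Set.Icc 0 1) p) *
                derivWithin φ (Set.Icc 0 1) p) := by
  replace hFBP : ∀ᵐ p ∂volume.restrict (Icc 0 1),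
      min (derivWithin (derivWithin δ (Icc 0 1)) (Icc 0 1) p -
        hbar p * deriv (deriv u) (qbar u δ p)) (lam * φ p - δ p) = 0 := hFBP
  have hbound : ∀ᵐ p ∂volume.restrict (Icc 0 1), qbarDeriv u δ p ≤ hbar p := by
    filter_upwards [hFBP] with p hp
    rw [qbarDeriv, div_le_iff_of_neg (hu'' _)]
    linarith [(le_min_iff.1 hp.ge).1]
  have hobstacle : ∀ᵐ p ∂volume.restrict (Icc 0 1), δ p - lam * φ p ≤ 0 := by
    filter_upwards [hFBP] with p hp
    linarith [(le_min_iff.1 hp.ge).2]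
  have hslack : ∀ᵐ p ∂volume.restrict (Icc 0 1),
      δ p - lam * φ p < 0 → qbarDeriv u δ p = hbar p := by
    filter_upwards [hFBP] with p hp hlt
    rw [qbarDeriv, div_eq_iff (hu'' _).ne]
    rcases min_choice (derivWithin (derivWithin δ (Icc 0 1)) (Icc 0 1) p -
      hbar p * deriv (deriv u) (qbar u δ p)) (lam * φ p - δ p) with h | h <;>
      rw [h] at hp <;> linarith
  have hqbar := memQ_qbar hu hu'' hδC2 hδconc hrange hδ'1 hbound
  exact ⟨⟨_, hqbar⟩, fun Q Q' hQ => lagrangian_le_lagrangian_qbar hu hu'' hφC1 hφ0 hδC2 hrange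
    hδ0 hqbar hobstacle hslack hQ⟩

/-- **Main theorem**: if `δ ∈ C²[0,1]` is concave and solves the free boundary problem
`min{δ'' - hbar·u''((u')⁻¹(δ')), λφ - δ} = 0` a.e. on `[0,1]` with `δ(0) = 0`,
`δ'(1) = u'(β)`, then `Q̄ := (u')⁻¹ ∘ δ'` belongs to `𝒬` and maximizes the
Lagrangian functional over `𝒬`. -/
theorem quantile_optimization_main
    (u : ℝ → ℝ) (hu : ContDiff ℝ 2 u)
    (hu' : ∀ x, 0 < deriv u x) (hu'' : ∀ x, deriv (deriv u) x < 0)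
    (hbar : ℝ → ℝ) (hbar0 : ∀ p ∈ Set.Icc (0 : ℝ) 1, 0 ≤ hbar p)
    (hbarc : ContinuousOn hbar (Set.Icc 0 1))
    (φ : ℝ → ℝ) (hφmono : MonotoneOn φ (Set.Icc 0 1))
    (hφC1 : ContDiffOn ℝ 1 φ (Set.Icc 0 1)) (hφ0 : φ 0 = 0)
    (lam β : ℝ) (hlam : 0 < lam)
    (hβ : deriv u β ∈ Set.range (deriv u))
    (δ : ℝ → ℝ) (hδC2 : ContDiffOn ℝ 2 δ (Set.Icc 0 1))
    (hδconc : ConcaveOn ℝ (Set.Icc 0 1) δ)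
    (hrange : ∀ p ∈ Set.Icc (0 : ℝ) 1,
      derivWithin δ (Set.Icc 0 1) p ∈ Set.range (deriv u))
    (hFBP : ∀ᵐ p ∂(MeasureTheory.volume.restrict (Set.Icc (0 : ℝ) 1)),
      min (derivWithin (derivWithin δ (Set.Icc 0 1)) (Set.Icc 0 1) p -
            hbar p * deriv (deriv u)
              (Function.invFun (deriv u) (derivWithin δ (Set.Icc 0 1) p)))
          (lam * φ p - δ p) = 0)
    (hδ0 : δ 0 = 0)
    (hδ'1 : derivWithin δ (Set.Icc 0 1) 1 = deriv u β) :
    (∃ Qb', MemQ β hbar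
        (fun p => Function.invFun (deriv u) (derivWithin δ (Set.Icc 0 1) p)) Qb') ∧
      ∀ Q Q', MemQ β hbar Q Q' →
        (∫ p in Set.Icc (0 : ℝ) 1,
            (u (Q p) - lam * Q p * derivWithin φ (Set.Icc 0 1) p)) ≤
          ∫ p in Set.Icc (0 : ℝ) 1,
            (u (Function.invFun (deriv u) (derivWithin δ (Set.Icc 0 1) p)) -
              lam * Function.invFun (deriv u) (derivWithin δ (Set.Icc 0 1) p) *
                derivWithin φ (Set.Icc 0 1) p) :=
  quantile_optimization_main_general u hu hu'' hbar φ hφC1 hφ0 lam β δ hδC2 hδconc hrange hFBP hδ0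
    hδ'1
end

section
/- Let u : ℝ → ℝ be twice continuously differentiable with u' > 0 and u'' < 0, let ħ : [0,1] → ℝ be nonnegative, let λ > 0, and let φ : [0,1] → ℝ be concave. If δ ∈ C²[0,1] satisfies the free boundary problem min{ δ''(p) − ħ(p)·u''((u')⁻¹(δ'(p))), λφ(p) − δ(p) } = 0 for a.e. p ∈ [0,1] (with δ' taking values in the range of u'), then δ is concave on [0,1]. -/
/-!
Where `δ'' > 0`, the first term of the minimum is positive (as `ħ ≥ 0` and `u'' < 0`), so the
obstacle is active: `δ = λφ` a.e. there. If `δ''(p) > 0` at an interior point, then `δ` is strictly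
convex on an interval around `p` on which it agrees a.e. with the concave function `λφ`; taking
three points of agreement contradicts strict convexity. Hence `δ'' ≤ 0` on `(0,1)`.
-/

open MeasureTheory Set Filter Topology

theorem exists_mem_of_ae_restrict_of_isOpen {X : Type*} [TopologicalSpace X] [MeasurableSpace X]
    [OpensMeasurableSpace X] {μ : Measure X} [μ.IsOpenPosMeasure] {s U : Set X} {P : X → Prop}
    (h : ∀ᵐ x ∂μ.restrict s, P x) (hU : IsOpen U) (hne : U.Nonempty) (hUs : U ⊆ s) :
    ∃ x ∈ U, P x := by
  have := ae_restrict_neBot.2 (hU.measure_ne_zero μ hne)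
  obtain ⟨x, hPx, hxU⟩ :=
    ((ae_restrict_of_ae_restrict_of_subset hUs h).and (ae_restrict_mem hU.measurableSet)).exists
  exact ⟨x, hxU, hPx⟩

theorem StrictConvexOn.not_ae_eq_of_concaveOn {f g : ℝ → ℝ} {c d : ℝ} (hcd : c < d)
    (hf : StrictConvexOn ℝ (Ioo c d) f) (hg : ConcaveOn ℝ (Ioo c d) g) :
    ¬ f =ᵐ[volume.restrict (Ioo c d)] g := by
  intro hfg
  have hzero : ∀ x y, x < y → Ioo x y ⊆ Ioo c d → ∃ z ∈ Ioo x y, (f - g) z = 0 :=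
    fun x y hxy hsub => exists_mem_of_ae_restrict_of_isOpen (hfg.mono fun z hz => sub_eq_zero.2 hz)
      isOpen_Ioo (nonempty_Ioo.2 hxy) hsub
  obtain ⟨x, hx, hx0⟩ := hzero c d hcd subset_rfl
  obtain ⟨z, hz, hz0⟩ := hzero x d hx.2 (Ioo_subset_Ioo_left hx.1.le)
  obtain ⟨y, hy, hy0⟩ := hzero x z hz.1 (Ioo_subset_Ioo hx.1.le hz.2.le)
  have hz_mem : z ∈ Ioo c d := ⟨hx.1.trans hz.1, hz.2⟩
  have hlt := (hf.sub_concaveOn hg).lt_on_openSegment hx hz_mem hz.1.ne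
    (by rwa [openSegment_eq_Ioo hz.1])
  simp [hx0, hy0, hz0] at hlt

theorem deriv2_nonpos_of_ae_eq_concaveOn {f g : ℝ → ℝ} {a b : ℝ}
    (hf : ContDiffOn ℝ 2 f (Ioo a b)) (hg : ConcaveOn ℝ (Ioo a b) g)
    (hfg : ∀ᵐ x ∂volume.restrict (Ioo a b), 0 < deriv^[2] f x → f x = g x) :
    ∀ p ∈ Ioo a b, deriv^[2] f p ≤ 0 := by
  intro p hp
  by_contra! hpos
  have hcont : ContinuousOn (deriv^[2] f) (Ioo a b) :=
    (hf.deriv_of_isOpen isOpen_Ioo le_rfl).continuousOn_deriv_of_isOpen isOpen_Ioo le_rfl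
  have hev : ∀ᶠ x in 𝓝 p, 0 < deriv^[2] f x ∧ x ∈ Ioo a b :=
    ((hcont.continuousAt (isOpen_Ioo.mem_nhds hp)).eventually (eventually_gt_nhds hpos)).and
      (isOpen_Ioo.mem_nhds hp)
  obtain ⟨c, d, ⟨hcp, hpd⟩, hsub⟩ := mem_nhds_iff_exists_Ioo_subset.1 hev
  have hcd_sub : Ioo c d ⊆ Ioo a b := fun x hx => (hsub hx).2
  have hconvex : StrictConvexOn ℝ (Ioo c d) f :=
    strictConvexOn_of_deriv2_pos' (convex_Ioo c d) (hf.continuousOn.mono hcd_sub)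
      fun x hx => (hsub hx).1
  refine hconvex.not_ae_eq_of_concaveOn (hcp.trans hpd) (hg.subset hcd_sub (convex_Ioo c d)) ?_
  filter_upwards [ae_restrict_of_ae_restrict_of_subset hcd_sub hfg,
    ae_restrict_mem measurableSet_Ioo] with x hx hmem
  exact hx (hsub hmem).1

theorem concaveOn_of_contDiffOn_interior_of_deriv2_nonpos {D : Set ℝ} (hD : Convex ℝ D)
    {f : ℝ → ℝ} (hf : ContinuousOn f D) (hf2 : ContDiffOn ℝ 2 f (interior D))
    (hf2_nonpos : ∀ x ∈ interior D, deriv^[2] f x ≤ 0) : ConcaveOn ℝ D f :=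
  concaveOn_of_deriv2_nonpos hD hf (hf2.differentiableOn two_ne_zero)
    ((hf2.deriv_of_isOpen isOpen_interior le_rfl).differentiableOn one_ne_zero) hf2_nonpos

theorem derivWithin_derivWithin_Icc_eq {f : ℝ → ℝ} {a b x : ℝ} (hx : x ∈ Ioo a b) :
    derivWithin (derivWithin f (Icc a b)) (Icc a b) x = deriv^[2] f x := by
  have hderiv : derivWithin f (Icc a b) =ᶠ[𝓝 x] deriv f :=
    eventually_of_mem (isOpen_Ioo.mem_nhds hx) fun y hy =>
      derivWithin_of_mem_nhds (Icc_mem_nhds hy.1 hy.2)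
  rw [derivWithin_of_mem_nhds (Icc_mem_nhds hx.1 hx.2), hderiv.deriv_eq]
  rfl

theorem fbp_solution_concave_general
    (u : ℝ → ℝ) (hu'' : ∀ x, deriv (deriv u) x < 0)
    (hbar : ℝ → ℝ) (hbar0 : ∀ p ∈ Set.Icc (0 : ℝ) 1, 0 ≤ hbar p)
    (lam : ℝ) (hlam : 0 < lam)
    (φ : ℝ → ℝ) (hφconc : ConcaveOn ℝ (Set.Icc 0 1) φ)
    (δ : ℝ → ℝ) (hδC2 : ContDiffOn ℝ 2 δ (Set.Icc 0 1))
    (hFBP : ∀ᵐ p ∂(MeasureTheory.volume.restrict (Set.Icc (0 : ℝ) 1)),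
      min (derivWithin (derivWithin δ (Set.Icc 0 1)) (Set.Icc 0 1) p -
            hbar p * deriv (deriv u)
              (Function.invFun (deriv u) (derivWithin δ (Set.Icc 0 1) p)))
          (lam * φ p - δ p) = 0) :
    ConcaveOn ℝ (Set.Icc 0 1) δ := by
  have hint : interior (Icc (0 : ℝ) 1) = Ioo 0 1 := interior_Icc
  have hδ : ContDiffOn ℝ 2 δ (Ioo 0 1) := hδC2.mono Ioo_subset_Icc_self
  have hobstacle : ∀ᵐ p ∂volume.restrict (Ioo (0 : ℝ) 1),
      0 < deriv^[2] δ p → δ p = (lam • φ) p := by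
    filter_upwards [ae_restrict_of_ae_restrict_of_subset Ioo_subset_Icc_self hFBP,
      ae_restrict_mem measurableSet_Ioo] with p hmin hp hpos
    rw [derivWithin_derivWithin_Icc_eq hp] at hmin
    generalize Function.invFun (deriv u) (derivWithin δ (Icc 0 1) p) = q at hmin
    have hdiffusion : 0 < deriv^[2] δ p - hbar p * deriv (deriv u) q := by
      linarith [mul_nonpos_of_nonneg_of_nonpos (hbar0 p (Ioo_subset_Icc_self hp)) (hu'' q).le]
    have hactive := ((min_eq_iff.1 hmin).resolve_left fun h => hdiffusion.ne' h.1).1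
    simp only [Pi.smul_apply, smul_eq_mul]
    linarith
  refine concaveOn_of_contDiffOn_interior_of_deriv2_nonpos (convex_Icc 0 1) hδC2.continuousOn
    (hint ▸ hδ) (hint ▸ ?_)
  exact deriv2_nonpos_of_ae_eq_concaveOn hδ
    ((hφconc.smul hlam.le).subset Ioo_subset_Icc_self (convex_Ioo 0 1)) hobstacle

/-- **Corollary**: if `φ` is concave on `[0,1]`, then any `C²` solution `δ` of the
free boundary problem `min{δ'' - hbar·u''((u')⁻¹(δ')), λφ - δ} = 0` a.e. on `[0,1]`
is concave on `[0,1]`. -/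
theorem fbp_solution_concave
    (u : ℝ → ℝ) (hu : ContDiff ℝ 2 u)
    (hu' : ∀ x, 0 < deriv u x) (hu'' : ∀ x, deriv (deriv u) x < 0)
    (hbar : ℝ → ℝ) (hbar0 : ∀ p ∈ Set.Icc (0 : ℝ) 1, 0 ≤ hbar p)
    (lam : ℝ) (hlam : 0 < lam)
    (φ : ℝ → ℝ) (hφconc : ConcaveOn ℝ (Set.Icc 0 1) φ)
    (δ : ℝ → ℝ) (hδC2 : ContDiffOn ℝ 2 δ (Set.Icc 0 1))
    (hrange : ∀ p ∈ Set.Icc (0 : ℝ) 1,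
      derivWithin δ (Set.Icc 0 1) p ∈ Set.range (deriv u))
    (hFBP : ∀ᵐ p ∂(MeasureTheory.volume.restrict (Set.Icc (0 : ℝ) 1)),
      min (derivWithin (derivWithin δ (Set.Icc 0 1)) (Set.Icc 0 1) p -
            hbar p * deriv (deriv u)
              (Function.invFun (deriv u) (derivWithin δ (Set.Icc 0 1) p)))
          (lam * φ p - δ p) = 0) :
    ConcaveOn ℝ (Set.Icc 0 1) δ :=
  fbp_solution_concave_general u hu'' hbar hbar0 lam hlam φ hφconc δ hδC2 hFBP
end

section
/- Let u : ℝ → ℝ be twice continuously differentiable with u' > 0 and u'' < 0, let ħ : [0,1] → ℝ be nonnegative, λ > 0, φ : [0,1] → ℝ, and β ∈ ℝ with u'(β) in the range of u'. Suppose δ ∈ C²[0,1] is concave with δ'(1) = u'(β), δ' takes values in the range of u', and min{ δ''(p) − ħ(p)·u''((u')⁻¹(δ'(p))), λφ(p) − δ(p) } = 0 a.e. on [0,1]. Then Q̄(p) := (u')⁻¹(δ'(p)) is absolutely continuous on [0,1], satisfies Q̄(1) = β, Q̄'(p) ≥ 0 a.e., and Q̄'(p) ≤ ħ(p) a.e.;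 that is, Q̄ is a feasible element of 𝒬. -/
open MeasureTheory Set

/-!
Since `u'' < 0`, `u'` is injective and its inverse `(u')⁻¹` is differentiable on the range of
`u'` with derivative `1 / u''((u')⁻¹)`, so `Q̄ = (u')⁻¹ ∘ δ'` is `C¹` on `[0,1]` with
`Q̄' = δ'' / u''(Q̄)`. Concavity gives `δ'' ≤ 0`, hence `Q̄' ≥ 0`; and wherever the minimum in the
free boundary equation vanishes its first argument is nonnegative, `δ'' ≥ ħ u''(Q̄)`, which after
division by `u''(Q̄) < 0` is `Q̄' ≤ ħ`.
-/

theorem Function.Injective.hasStrictDerivAt_invFun {𝕜 : Type*} [NontriviallyNormedField 𝕜]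
    [CompleteSpace 𝕜] {f : 𝕜 → 𝕜} {f' a : 𝕜} (hinj : f.Injective)
    (hf : HasStrictDerivAt f f' a) (hf' : f' ≠ 0) :
    HasStrictDerivAt (Function.invFun f) f'⁻¹ (f a) := by
  refine (hf.to_localInverse hf').congr_of_eventuallyEq ?_
  filter_upwards [hf.eventually_right_inverse hf'] with y hy
  conv_rhs => rw [← hy]
  exact (Function.leftInverse_invFun hinj _).symm

theorem hasDerivAt_invFun_of_mem_range {f : ℝ → ℝ} (hf : ContDiff ℝ 1 f) (hinj : f.Injective)
    (hf' : ∀ x, deriv f x ≠ 0) {y : ℝ} (hy : y ∈ range f) :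
    HasDerivAt (Function.invFun f) (deriv f (Function.invFun f y))⁻¹ y := by
  obtain ⟨x, rfl⟩ := hy
  rw [Function.leftInverse_invFun hinj x]
  exact (hinj.hasStrictDerivAt_invFun (hf.contDiffAt.hasStrictDerivAt one_ne_zero)
    (hf' x)).hasDerivAt

theorem absContOn01_of_hasDerivWithinAt {Q Q' : ℝ → ℝ}
    (hQ : ∀ p ∈ Icc (0 : ℝ) 1, HasDerivWithinAt Q (Q' p) (Icc 0 1) p)
    (hQ' : ContinuousOn Q' (Icc 0 1)) : AbsContOn01 Q Q' := by
  refine ⟨hQ'.integrableOn_Icc, fun p hp => ?_⟩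
  have hsub : Icc 0 p ⊆ Icc (0 : ℝ) 1 := Icc_subset_Icc le_rfl hp.2
  rw [intervalIntegral.integral_eq_sub_of_hasDeriv_right_of_le hp.1
    (fun x hx => (hQ x (hsub hx)).continuousWithinAt.mono hsub)
    (fun x hx => ((hQ x (hsub (Ioo_subset_Icc_self hx))).hasDerivAt
      (Icc_mem_nhds hx.1 (hx.2.trans_le hp.2))).hasDerivWithinAt)
    ((hQ'.mono hsub).intervalIntegrable_of_Icc hp.1)]
  ring

theorem inv_mul_mem_Icc_of_sub_mul_nonneg {c d h : ℝ} (hc : c < 0) (hd : d ≤ 0)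
    (hdh : 0 ≤ d - h * c) : c⁻¹ * d ∈ Icc 0 h := by
  rw [inv_mul_eq_div]
  exact ⟨div_nonneg_of_nonpos hd hc.le, (div_le_iff_of_neg hc).2 (by linarith)⟩

theorem fbp_solution_feasible_general
    (u : ℝ → ℝ) (hu : ContDiff ℝ 2 u)
    (hu'' : ∀ x, deriv (deriv u) x < 0)
    (hbar : ℝ → ℝ)
    (lam β : ℝ)
    (φ : ℝ → ℝ)
    (δ : ℝ → ℝ) (hδC2 : ContDiffOn ℝ 2 δ (Set.Icc 0 1))
    (hδconc : ConcaveOn ℝ (Set.Icc 0 1) δ)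
    (hδ'1 : derivWithin δ (Set.Icc 0 1) 1 = deriv u β)
    (hrange : ∀ p ∈ Set.Icc (0 : ℝ) 1,
      derivWithin δ (Set.Icc 0 1) p ∈ Set.range (deriv u))
    (hFBP : ∀ᵐ p ∂(MeasureTheory.volume.restrict (Set.Icc (0 : ℝ) 1)),
      min (derivWithin (derivWithin δ (Set.Icc 0 1)) (Set.Icc 0 1) p -
            hbar p * deriv (deriv u)
              (Function.invFun (deriv u) (derivWithin δ (Set.Icc 0 1) p)))
          (lam * φ p - δ p) = 0) :
    ∃ Qb' : ℝ → ℝ,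
      AbsContOn01 (fun p => Function.invFun (deriv u) (derivWithin δ (Set.Icc 0 1) p)) Qb' ∧
      Function.invFun (deriv u) (derivWithin δ (Set.Icc 0 1) 1) = β ∧
      (∀ᵐ p ∂(MeasureTheory.volume.restrict (Set.Icc (0 : ℝ) 1)),
        0 ≤ Qb' p ∧ Qb' p ≤ hbar p) := by
  set I := Icc (0 : ℝ) 1
  set Q := fun p => Function.invFun (deriv u) (derivWithin δ I p)
  have hu' : ContDiff ℝ 1 (deriv u) := hu.deriv'
  have hinj : (deriv u).Injective := (strictAnti_of_deriv_neg hu'').injective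
  have hδ' : ContDiffOn ℝ 1 (derivWithin δ I) I :=
    hδC2.derivWithin (uniqueDiffOn_Icc zero_lt_one) (by norm_num)
  have hQ : ∀ p ∈ I, HasDerivWithinAt Q
      ((deriv (deriv u) (Q p))⁻¹ * derivWithin (derivWithin δ I) I p) I p := fun p hp =>
    (hasDerivAt_invFun_of_mem_range hu' hinj (fun x => (hu'' x).ne) (hrange p hp)
      ).comp_hasDerivWithinAt p (hδ'.differentiableOn one_ne_zero p hp).hasDerivWithinAt
  have hQ'cont : ContinuousOn
      (fun p => (deriv (deriv u) (Q p))⁻¹ * derivWithin (derivWithin δ I) I p) I :=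
    (((hu'.continuous_deriv le_rfl).comp_continuousOn
      fun p hp => (hQ p hp).continuousWithinAt).inv₀ fun p _ => (hu'' _).ne).mul
      (hδ'.continuousOn_derivWithin (uniqueDiffOn_Icc zero_lt_one) le_rfl)
  have hδ''_nonpos : ∀ p, derivWithin (derivWithin δ I) I p ≤ 0 := fun p =>
    (hδconc.antitoneOn_derivWithin (hδC2.differentiableOn (by norm_num))).derivWithin_nonpos
  refine ⟨_, absContOn01_of_hasDerivWithinAt hQ hQ'cont,
    by rw [hδ'1, Function.leftInverse_invFun hinj], ?_⟩
  filter_upwards [hFBP] with p hp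
  exact inv_mul_mem_Icc_of_sub_mul_nonneg (hu'' _) (hδ''_nonpos p) (hp ▸ min_le_left _ _)

/-- **Feasibility**: if `δ ∈ C²[0,1]` is concave, solves the free boundary problem
a.e. and satisfies `δ'(1) = u'(β)`, then `Q̄ := (u')⁻¹ ∘ δ'` is absolutely continuous
on `[0,1]` with `Q̄(1) = β` and `0 ≤ Q̄' ≤ hbar` a.e., i.e. `Q̄` is feasible for `𝒬`. -/
theorem fbp_solution_feasible
    (u : ℝ → ℝ) (hu : ContDiff ℝ 2 u)
    (hu' : ∀ x, 0 < deriv u x) (hu'' : ∀ x, deriv (deriv u) x < 0)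
    (hbar : ℝ → ℝ) (hbar0 : ∀ p ∈ Set.Icc (0 : ℝ) 1, 0 ≤ hbar p)
    (lam β : ℝ) (hlam : 0 < lam)
    (φ : ℝ → ℝ)
    (hβ : deriv u β ∈ Set.range (deriv u))
    (δ : ℝ → ℝ) (hδC2 : ContDiffOn ℝ 2 δ (Set.Icc 0 1))
    (hδconc : ConcaveOn ℝ (Set.Icc 0 1) δ)
    (hδ'1 : derivWithin δ (Set.Icc 0 1) 1 = deriv u β)
    (hrange : ∀ p ∈ Set.Icc (0 : ℝ) 1,
      derivWithin δ (Set.Icc 0 1) p ∈ Set.range (deriv u))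
    (hFBP : ∀ᵐ p ∂(MeasureTheory.volume.restrict (Set.Icc (0 : ℝ) 1)),
      min (derivWithin (derivWithin δ (Set.Icc 0 1)) (Set.Icc 0 1) p -
            hbar p * deriv (deriv u)
              (Function.invFun (deriv u) (derivWithin δ (Set.Icc 0 1) p)))
          (lam * φ p - δ p) = 0) :
    ∃ Qb' : ℝ → ℝ,
      AbsContOn01 (fun p => Function.invFun (deriv u) (derivWithin δ (Set.Icc 0 1) p)) Qb' ∧
      Function.invFun (deriv u) (derivWithin δ (Set.Icc 0 1) 1) = β ∧
      (∀ᵐ p ∂(MeasureTheory.volume.restrict (Set.Icc (0 : ℝ) 1)),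
        0 ≤ Qb' p ∧ Qb' p ≤ hbar p) :=
  fbp_solution_feasible_general u hu hu'' hbar lam β φ δ hδC2 hδconc hδ'1 hrange hFBP
end

section
/- Let β ∈ ℝ, let ħ : [0,1] → ℝ be nonnegative and integrable, and let φ : [0,1] → ℝ be increasing and absolutely continuous with φ(0) = 0. Then for every absolutely continuous Q : [0,1] → ℝ with Q(1) = β and 0 ≤ Q'(p) ≤ ħ(p) a.e., one has ∫₀¹ Q(p) φ'(p) dp ≥ β φ(1) − ∫₀¹ φ(p) ħ(p) dp. -/
open MeasureTheory Set

/-- **Budget lower bound**: for `φ` increasing, absolutely continuous with `φ(0) = 0`,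
and any absolutely continuous `Q` with `Q(1) = β` and `0 ≤ Q' ≤ hbar` a.e.,
one has `∫₀¹ Q φ' dp ≥ β φ(1) - ∫₀¹ φ hbar dp`. -/
theorem budget_lower_bound
    (β : ℝ) (hbar : ℝ → ℝ) (hbar0 : ∀ p ∈ Set.Icc (0 : ℝ) 1, 0 ≤ hbar p)
    (hbarint : MeasureTheory.IntegrableOn hbar (Set.Icc 0 1))
    (φ φ' : ℝ → ℝ) (hφmono : MonotoneOn φ (Set.Icc 0 1))
    (hφAC : AbsContOn01 φ φ') (hφ0 : φ 0 = 0) :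
    ∀ Q Q' : ℝ → ℝ, AbsContOn01 Q Q' → Q 1 = β →
      (∀ᵐ p ∂(MeasureTheory.volume.restrict (Set.Icc (0 : ℝ) 1)),
        0 ≤ Q' p ∧ Q' p ≤ hbar p) →
      β * φ 1 - (∫ p in Set.Icc (0 : ℝ) 1, φ p * hbar p) ≤
        ∫ p in Set.Icc (0 : ℝ) 1, Q p * φ' p := by
  obtain ⟨hφ'int, hφrep⟩ := hφAC
  intro Q Q' hQAC hQ1 haeQ
  obtain ⟨hQ'int, hQrep⟩ := hQAC
  set μ := volume.restrict (Icc (0:ℝ) 1) with hμ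
  -- the triangle
  set S : Set (ℝ × ℝ) := {z | 0 < z.2 ∧ z.2 ≤ z.1} with hS
  have hSmeas : MeasurableSet S :=
    (measurableSet_lt measurable_const measurable_snd).inter
      (measurableSet_le measurable_snd measurable_fst)
  set F : ℝ × ℝ → ℝ := S.indicator (fun z => φ' z.1 * Q' z.2) with hF
  have hFint : Integrable F (μ.prod μ) :=
    (hφ'int.mul_prod hQ'int).indicator hSmeas
  have hFint' : Integrable (Function.uncurry fun p t => F (p, t)) (μ.prod μ) := hFint
  -- left sections
  have hleft : (fun p => ∫ t, F (p, t) ∂μ) =ᵐ[μ] fun p => φ' p * (Q p - Q 0) := by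
    filter_upwards [ae_restrict_mem measurableSet_Icc] with p hp
    have hsec : (fun t => F (p, t)) = (Ioc 0 p).indicator (fun t => φ' p * Q' t) := by
      funext t
      simp only [hF, hS, Set.indicator_apply, Set.mem_setOf_eq, Set.mem_Ioc]
    rw [hsec, integral_indicator measurableSet_Ioc, hμ,
      Measure.restrict_restrict measurableSet_Ioc,
      inter_eq_left.mpr (Ioc_subset_Icc_self.trans (Icc_subset_Icc le_rfl hp.2)),
      integral_const_mul]
    have := hQrep p hp
    rw [intervalIntegral.integral_of_le hp.1] at this
    rw [this]
    ring
  -- right sections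
  have hIoc : ∀ᵐ t ∂μ, t ∈ Ioc (0:ℝ) 1 := by
    rw [hμ, ← Measure.restrict_congr_set Ioc_ae_eq_Icc]
    exact ae_restrict_mem measurableSet_Ioc
  have hφII : ∀ t ∈ Icc (0:ℝ) 1, IntervalIntegrable φ' volume 0 t := fun t ht =>
    (hφ'int.mono_set (by rw [uIcc_of_le ht.1]; exact Icc_subset_Icc le_rfl ht.2)).intervalIntegrable
  have hright : (fun t => ∫ p, F (p, t) ∂μ) =ᵐ[μ] fun t => Q' t * (φ 1 - φ t) := by
    filter_upwards [hIoc] with t ht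
    have hsec : (fun p => F (p, t)) = (Ici t).indicator (fun p => φ' p * Q' t) := by
      funext p
      simp only [hF, hS, Set.indicator_apply, Set.mem_setOf_eq, Set.mem_Ici, ht.1, true_and]
    have hinter : Ici t ∩ Icc (0:ℝ) 1 = Icc t 1 := by
      ext p
      simp only [mem_inter_iff, mem_Ici, mem_Icc]
      exact ⟨fun h => ⟨h.1, h.2.2⟩, fun h => ⟨h.1, (le_of_lt ht.1).trans h.1, h.2⟩⟩
    rw [hsec, integral_indicator measurableSet_Ici, hμ,
      Measure.restrict_restrict measurableSet_Ici, hinter, integral_mul_const,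
      integral_Icc_eq_integral_Ioc, ← intervalIntegral.integral_of_le ht.2,
      ← intervalIntegral.integral_interval_sub_left (hφII 1 ⟨zero_le_one, le_rfl⟩)
        (hφII t ⟨le_of_lt ht.1, ht.2⟩)]
    have h1 := hφrep 1 ⟨zero_le_one, le_rfl⟩
    have h2 := hφrep t ⟨le_of_lt ht.1, ht.2⟩
    rw [h1, h2, hφ0]
    ring
  -- Fubini
  have hswap := MeasureTheory.integral_integral_swap hFint'
  have hL : ∫ p, ∫ t, F (p, t) ∂μ ∂μ = ∫ p, φ' p * (Q p - Q 0) ∂μ :=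
    integral_congr_ae hleft
  have hR : ∫ t, ∫ p, F (p, t) ∂μ ∂μ = ∫ t, Q' t * (φ 1 - φ t) ∂μ :=
    integral_congr_ae hright
  -- φ is a.e. equal to a continuous function on [0,1], hence nicely integrable against things
  have hψcont : ContinuousOn (fun x => ∫ t in Ioc (0:ℝ) x, φ' t) (Icc 0 1) :=
    intervalIntegral.continuousOn_primitive hφ'int
  have hφae : φ =ᵐ[μ] fun x => ∫ t in Ioc (0:ℝ) x, φ' t := by
    filter_upwards [ae_restrict_mem measurableSet_Icc] with p hp
    rw [hφrep p hp, hφ0, intervalIntegral.integral_of_le hp.1, zero_add]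
  have hφaesm : AEStronglyMeasurable φ μ :=
    (AEStronglyMeasurable.congr (hψcont.aestronglyMeasurable measurableSet_Icc) hφae.symm)
  have hφbd : ∀ᵐ p ∂μ, ‖φ p‖ ≤ φ 1 := by
    filter_upwards [ae_restrict_mem measurableSet_Icc] with p hp
    rw [Real.norm_eq_abs, abs_of_nonneg (hφ0 ▸ hφmono (left_mem_Icc.mpr zero_le_one) hp hp.1)]
    exact hφmono hp (right_mem_Icc.mpr zero_le_one) hp.2
  have hφQ'int : Integrable (fun t => φ t * Q' t) μ :=
    Integrable.bdd_mul hQ'int hφaesm hφbd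
  have hφhbarint : Integrable (fun t => φ t * hbar t) μ :=
    Integrable.bdd_mul hbarint hφaesm hφbd
  -- splitting the right-hand integral
  have hQ'i : Integrable Q' μ := hQ'int
  have hRsplit : ∫ t, Q' t * (φ 1 - φ t) ∂μ
      = φ 1 * (∫ t, Q' t ∂μ) - ∫ t, φ t * Q' t ∂μ := by
    have : (fun t => Q' t * (φ 1 - φ t)) = fun t => φ 1 * Q' t - φ t * Q' t := by
      funext t; ring
    rw [this, integral_sub ((hQ'i).const_mul _) hφQ'int, integral_const_mul]
  -- total masses
  have hQ'tot : ∫ t, Q' t ∂μ = β - Q 0 := by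
    have := hQrep 1 ⟨zero_le_one, le_rfl⟩
    rw [hQ1] at this
    rw [hμ, integral_Icc_eq_integral_Ioc, ← intervalIntegral.integral_of_le zero_le_one]
    linarith
  -- monotone comparison
  have hcmp : ∫ t, φ t * Q' t ∂μ ≤ ∫ t, φ t * hbar t ∂μ := by
    refine integral_mono_ae hφQ'int hφhbarint ?_
    filter_upwards [haeQ, ae_restrict_mem measurableSet_Icc] with t htQ ht
    exact mul_le_mul_of_nonneg_left htQ.2
      (hφ0 ▸ hφmono (left_mem_Icc.mpr zero_le_one) ht ht.1)
  -- putting the LHS integral together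
  have hQφ' : ∫ p, Q p * φ' p ∂μ
      = Q 0 * (∫ p, φ' p ∂μ) + ∫ p, φ' p * (Q p - Q 0) ∂μ := by
    have hsum : (fun p => Q p * φ' p) =ᵐ[μ]
        fun p => Q 0 * φ' p + φ' p * (Q p - Q 0) := by
      filter_upwards with p using by ring
    rw [integral_congr_ae hsum,
      integral_add ((hφ'int : Integrable φ' μ).const_mul _)
        (hFint'.integral_prod_left.congr hleft),
      integral_const_mul]
  have hφ'tot : ∫ p, φ' p ∂μ = φ 1 := by
    have := hφrep 1 ⟨zero_le_one, le_rfl⟩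
    rw [hμ, integral_Icc_eq_integral_Ioc, ← intervalIntegral.integral_of_le zero_le_one]
    linarith [hφ0]
  have key : ∫ p, Q p * φ' p ∂μ = β * φ 1 - ∫ t, φ t * Q' t ∂μ := by
    rw [hQφ', hφ'tot, ← hL, hswap, hR, hRsplit, hQ'tot]; ring
  calc β * φ 1 - (∫ p in Icc (0:ℝ) 1, φ p * hbar p)
      ≤ β * φ 1 - ∫ t, φ t * Q' t ∂μ := by
        have : (∫ p in Icc (0:ℝ) 1, φ p * hbar p) = ∫ t, φ t * hbar t ∂μ := rfl
        linarith [hcmp]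
    _ = ∫ p, Q p * φ' p ∂μ := key.symm
end

section
/- Let β ∈ ℝ, let ħ : [0,1] → ℝ be nonnegative and integrable, let φ : [0,1] → ℝ be increasing and absolutely continuous with φ(0) = 0 and φ' > 0 a.e., and set ϖ := β φ(1) − ∫₀¹ φ(p) ħ(p) dp. Then the unique absolutely continuous function Q : [0,1] → ℝ with Q(1) = β, 0 ≤ Q' ≤ ħ a.e., and ∫₀¹ Q(p) φ'(p) dp ≤ ϖ is Q₀(p) := β − ∫ₚ¹ ħ(t) dt. -/
open MeasureTheory Set

lemma aux_intervalIntegrable {f : ℝ → ℝ} (h : IntegrableOn f (Icc 0 1))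
    {a b : ℝ} (ha : a ∈ Icc (0:ℝ) 1) (hb : b ∈ Icc (0:ℝ) 1) :
    IntervalIntegrable f volume a b :=
  (h.mono_set (uIcc_subset_Icc ha hb)).intervalIntegrable

lemma aux_continuousOn {Q Q' : ℝ → ℝ} (h : AbsContOn01 Q Q') :
    ContinuousOn Q (Icc 0 1) := by
  have h1 : IntegrableOn Q' (uIcc (0:ℝ) 1) := by
    rw [uIcc_of_le zero_le_one]; exact h.1
  have h2 := intervalIntegral.continuousOn_primitive_interval (μ := volume) h1
  rw [uIcc_of_le zero_le_one] at h2
  exact (continuousOn_const.add h2).congr fun p hp => h.2 p hp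

/-- integrability of Q * φ' when Q is continuous on Icc 0 1 -/
lemma aux_integrable_mul {Q g : ℝ → ℝ} (hQ : ContinuousOn Q (Icc 0 1))
    (hg : IntegrableOn g (Icc 0 1)) :
    IntegrableOn (fun p => Q p * g p) (Icc 0 1) := by
  obtain ⟨C, hC⟩ := isCompact_Icc.exists_bound_of_continuousOn hQ
  exact hg.bdd_mul (hQ.aestronglyMeasurable measurableSet_Icc)
    ((ae_restrict_mem measurableSet_Icc).mono fun x hx => hC x hx)

lemma aux_fubini {f g : ℝ → ℝ} (hf : IntegrableOn f (Icc 0 1))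
    (hg : IntegrableOn g (Icc 0 1)) :
    ∫ p in Icc (0:ℝ) 1, f p * ∫ t in Ioc p 1, g t
      = ∫ t in Icc (0:ℝ) 1, (∫ p in Ico 0 t, f p) * g t := by
  set μ := volume.restrict (Icc (0:ℝ) 1) with hμ
  set F : ℝ → ℝ → ℝ := fun p t => ({z : ℝ × ℝ | z.1 < z.2}).indicator
      (fun z => f z.1 * g z.2) (p, t) with hF
  have hFi : Integrable (Function.uncurry F) (μ.prod μ) := by
    have : Function.uncurry F = ({z : ℝ × ℝ | z.1 < z.2}).indicator
        (fun z => f z.1 * g z.2) := by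
      ext z; simp [Function.uncurry, hF]
    rw [this]
    exact (hf.mul_prod hg).indicator (measurableSet_lt measurable_fst measurable_snd)
  have hswap := MeasureTheory.integral_integral_swap hFi
  have hL : ∫ p, ∫ t, F p t ∂μ ∂μ = ∫ p in Icc (0:ℝ) 1, f p * ∫ t in Ioc p 1, g t := by
    refine integral_congr_ae ?_
    filter_upwards [ae_restrict_mem measurableSet_Icc] with p hp
    have h1 : (fun t => F p t) = (Ioi p).indicator (fun t => f p * g t) := by
      ext t
      by_cases hlt : p < t <;> simp [hF, Set.indicator_apply, hlt]
    rw [h1, integral_indicator measurableSet_Ioi, hμ,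
      Measure.restrict_restrict measurableSet_Ioi]
    have h2 : Ioi p ∩ Icc (0:ℝ) 1 = Ioc p 1 := by
      ext x
      simp only [mem_inter_iff, mem_Ioi, mem_Icc, mem_Ioc]
      constructor
      · rintro ⟨h1, _, h3⟩; exact ⟨h1, h3⟩
      · rintro ⟨h1, h3⟩; exact ⟨h1, le_trans hp.1 h1.le, h3⟩
    rw [h2, integral_const_mul]
  have hR : ∫ t, ∫ p, F p t ∂μ ∂μ = ∫ t in Icc (0:ℝ) 1, (∫ p in Ico 0 t, f p) * g t := by
    refine integral_congr_ae ?_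
    filter_upwards [ae_restrict_mem measurableSet_Icc] with t ht
    have h1 : (fun p => F p t) = (Iio t).indicator (fun p => f p * g t) := by
      ext p
      by_cases hlt : p < t <;> simp [hF, Set.indicator_apply, hlt]
    rw [h1, integral_indicator measurableSet_Iio, hμ,
      Measure.restrict_restrict measurableSet_Iio]
    have h2 : Iio t ∩ Icc (0:ℝ) 1 = Ico 0 t := by
      ext x
      simp only [mem_inter_iff, mem_Iio, mem_Icc, mem_Ico]
      constructor
      · rintro ⟨h1, h3, _⟩; exact ⟨h3, h1⟩
      · rintro ⟨h3, h1⟩; exact ⟨h1, h3, le_trans h1.le ht.2⟩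
    rw [h2, integral_mul_const]
  rw [← hL, ← hR, hswap]

lemma aux_eq_zero_of_ae_zero {g : ℝ → ℝ} (hc : ContinuousOn g (Icc 0 1))
    (h0 : ∀ᵐ x ∂(volume.restrict (Icc (0:ℝ) 1)), g x = 0) :
    ∀ p ∈ Icc (0:ℝ) 1, g p = 0 := by
  intro p hp
  by_contra hne
  have hcw : ContinuousWithinAt g (Icc 0 1) p := hc p hp
  have hev : ∀ᶠ x in nhdsWithin p (Icc (0:ℝ) 1), g x ≠ 0 :=
    hcw.eventually (isOpen_ne.eventually_mem hne)
  rw [eventually_nhdsWithin_iff, Metric.eventually_nhds_iff] at hev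
  obtain ⟨ε, hε, hball⟩ := hev
  have h0' : ∀ᵐ x ∂(volume : Measure ℝ), x ∈ Icc (0:ℝ) 1 → g x = 0 :=
    (ae_restrict_iff' measurableSet_Icc).mp h0
  rw [ae_iff] at h0'
  set a := max 0 (p - ε) with ha
  set b := min 1 (p + ε) with hb
  have hab : a < b := by
    rw [ha, hb, lt_min_iff]
    constructor
    · exact max_lt zero_lt_one (by linarith [hp.2])
    · exact max_lt (by linarith [hp.1]) (by linarith)
  have hsub : Ioo a b ⊆ {x | ¬ (x ∈ Icc (0:ℝ) 1 → g x = 0)} := by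
    intro x hx
    have hx1 : x ∈ Icc (0:ℝ) 1 := by
      constructor
      · exact le_trans (le_max_left _ _) hx.1.le
      · exact le_trans hx.2.le (min_le_left _ _)
    have hd : dist x p < ε := by
      rw [Real.dist_eq, abs_sub_lt_iff]
      constructor
      · have := hx.2; rw [hb] at this
        have := lt_of_lt_of_le this (min_le_right 1 (p + ε)); linarith
      · have := hx.1; rw [ha] at this
        have := lt_of_le_of_lt (le_max_right 0 (p - ε)) this; linarith
    intro hcon
    exact hball hd hx1 (hcon hx1)
  have := measure_mono_null hsub h0'
  rw [Real.volume_Ioo] at this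
  exact absurd this (by simp [ENNReal.ofReal_eq_zero, hab, not_le, sub_pos])


/-- **Borderline feasibility**: when the budget level `ϖ` equals the minimal attainable
budget `βφ(1) - ∫₀¹ φ hbar`, the extremal quantile `Q₀(p) = β - ∫ₚ¹ hbar` is the unique
absolutely continuous function with `Q(1) = β`, `0 ≤ Q' ≤ hbar` a.e. and
`∫₀¹ Q φ' ≤ ϖ`. -/
theorem borderline_feasibility_unique
    (β : ℝ) (hbar : ℝ → ℝ) (hbar0 : ∀ p ∈ Set.Icc (0 : ℝ) 1, 0 ≤ hbar p)
    (hbarint : MeasureTheory.IntegrableOn hbar (Set.Icc 0 1))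
    (φ φ' : ℝ → ℝ) (hφmono : MonotoneOn φ (Set.Icc 0 1))
    (hφAC : AbsContOn01 φ φ') (hφ0 : φ 0 = 0)
    (hφ'pos : ∀ᵐ p ∂(MeasureTheory.volume.restrict (Set.Icc (0 : ℝ) 1)), 0 < φ' p)
    (ϖ : ℝ) (hϖ : ϖ = β * φ 1 - ∫ p in Set.Icc (0 : ℝ) 1, φ p * hbar p) :
    (AbsContOn01 (fun p => β - ∫ t in p..(1 : ℝ), hbar t) hbar ∧
      (β - ∫ t in (1 : ℝ)..(1 : ℝ), hbar t) = β ∧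
      (∀ᵐ p ∂(MeasureTheory.volume.restrict (Set.Icc (0 : ℝ) 1)),
        0 ≤ hbar p ∧ hbar p ≤ hbar p) ∧
      (∫ p in Set.Icc (0 : ℝ) 1, (β - ∫ t in p..(1 : ℝ), hbar t) * φ' p) ≤ ϖ) ∧
    ∀ Q Q' : ℝ → ℝ, AbsContOn01 Q Q' → Q 1 = β →
      (∀ᵐ p ∂(MeasureTheory.volume.restrict (Set.Icc (0 : ℝ) 1)),
        0 ≤ Q' p ∧ Q' p ≤ hbar p) →
      (∫ p in Set.Icc (0 : ℝ) 1, Q p * φ' p) ≤ ϖ →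
      ∀ p ∈ Set.Icc (0 : ℝ) 1, Q p = β - ∫ t in p..(1 : ℝ), hbar t := by
  have hmem0 : (0:ℝ) ∈ Icc (0:ℝ) 1 := ⟨le_refl 0, zero_le_one⟩
  have hmem1 : (1:ℝ) ∈ Icc (0:ℝ) 1 := ⟨zero_le_one, le_refl 1⟩
  set Q₀ : ℝ → ℝ := fun p => β - ∫ t in p..(1:ℝ), hbar t with hQ₀def
  have hφ'int : IntegrableOn φ' (Icc (0:ℝ) 1) := hφAC.1
  -- FTC representation of Q₀
  have hQ₀rep : ∀ p ∈ Icc (0:ℝ) 1, Q₀ p = Q₀ 0 + ∫ t in (0:ℝ)..p, hbar t := by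
    intro p hp
    have hadd := intervalIntegral.integral_add_adjacent_intervals
      (aux_intervalIntegrable hbarint hmem0 hp) (aux_intervalIntegrable hbarint hp hmem1)
    simp only [hQ₀def]
    linarith
  have hQ₀AC : AbsContOn01 Q₀ hbar := ⟨hbarint, hQ₀rep⟩
  have hQ₀cont : ContinuousOn Q₀ (Icc 0 1) := aux_continuousOn hQ₀AC
  have hQ₀φ'int : IntegrableOn (fun p => Q₀ p * φ' p) (Icc (0:ℝ) 1) :=
    aux_integrable_mul hQ₀cont hφ'int
  -- φ values via FTC
  have hφval : ∀ t ∈ Icc (0:ℝ) 1, φ t = ∫ s in (0:ℝ)..t, φ' s := by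
    intro t ht
    rw [hφAC.2 t ht, hφ0, zero_add]
  -- budget identity for Q₀
  have hbudgetEq : ∫ p in Icc (0:ℝ) 1, Q₀ p * φ' p = ϖ := by
    set I : ℝ → ℝ := fun p => ∫ t in p..(1:ℝ), hbar t with hIdef
    have hIcont : ContinuousOn I (Icc 0 1) := by
      have : ContinuousOn (fun p => β - Q₀ p) (Icc (0:ℝ) 1) :=
        continuousOn_const.sub hQ₀cont
      refine this.congr fun p _ => ?_
      simp [hIdef, hQ₀def]
    have hIint : IntegrableOn (fun p => I p * φ' p) (Icc (0:ℝ) 1) :=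
      aux_integrable_mul hIcont hφ'int
    have hβint : IntegrableOn (fun p => β * φ' p) (Icc (0:ℝ) 1) := hφ'int.const_mul β
    have hsplit : ∫ p in Icc (0:ℝ) 1, Q₀ p * φ' p
        = (∫ p in Icc (0:ℝ) 1, β * φ' p) - ∫ p in Icc (0:ℝ) 1, I p * φ' p := by
      rw [← integral_sub hβint hIint]
      refine integral_congr_ae (Filter.Eventually.of_forall fun p => ?_)
      simp only [hQ₀def, hIdef]; ring
    have hβpart : ∫ p in Icc (0:ℝ) 1, β * φ' p = β * φ 1 := by
      rw [integral_const_mul, integral_Icc_eq_integral_Ioc,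
        ← intervalIntegral.integral_of_le zero_le_one, ← hφval 1 hmem1]
    have hIpart : ∫ p in Icc (0:ℝ) 1, I p * φ' p
        = ∫ p in Icc (0:ℝ) 1, φ p * hbar p := by
      have step1 : ∫ p in Icc (0:ℝ) 1, I p * φ' p
          = ∫ p in Icc (0:ℝ) 1, φ' p * ∫ t in Ioc p 1, hbar t := by
        refine integral_congr_ae ?_
        filter_upwards [ae_restrict_mem measurableSet_Icc] with p hp
        rw [hIdef]
        simp only
        rw [intervalIntegral.integral_of_le hp.2, mul_comm]
      have step2 := aux_fubini hφ'int hbarint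
      have step3 : ∫ t in Icc (0:ℝ) 1, (∫ p in Ico 0 t, φ' p) * hbar t
          = ∫ t in Icc (0:ℝ) 1, φ t * hbar t := by
        refine integral_congr_ae ?_
        filter_upwards [ae_restrict_mem measurableSet_Icc] with t ht
        rw [integral_Ico_eq_integral_Ioo, ← integral_Ioc_eq_integral_Ioo,
          ← intervalIntegral.integral_of_le ht.1, ← hφval t ht]
      rw [step1, step2, step3]
    rw [hsplit, hβpart, hIpart, hϖ]
  constructor
  · refine ⟨hQ₀AC, by simp, ?_, le_of_eq hbudgetEq⟩
    filter_upwards [ae_restrict_mem measurableSet_Icc] with p hp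
    exact ⟨hbar0 p hp, le_rfl⟩
  · intro Q Q' hAC hQ1 hae hbud p hp
    have hQ'int : IntegrableOn Q' (Icc (0:ℝ) 1) := hAC.1
    have hQrep : ∀ q ∈ Icc (0:ℝ) 1, Q q = β - ∫ t in q..(1:ℝ), Q' t := by
      intro q hq
      have h1 := hAC.2 1 hmem1
      have h2 := hAC.2 q hq
      have hadd := intervalIntegral.integral_add_adjacent_intervals
        (aux_intervalIntegrable hQ'int hmem0 hq) (aux_intervalIntegrable hQ'int hq hmem1)
      rw [hQ1] at h1
      linarith
    have hQcont : ContinuousOn Q (Icc 0 1) := aux_continuousOn hAC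
    have hgpt : ∀ q ∈ Icc (0:ℝ) 1, Q₀ q ≤ Q q := by
      intro q hq
      rw [hQrep q hq]
      simp only [hQ₀def]
      have hmono : ∫ t in q..(1:ℝ), Q' t ≤ ∫ t in q..(1:ℝ), hbar t := by
        refine intervalIntegral.integral_mono_ae_restrict hq.2
          (aux_intervalIntegrable hQ'int hq hmem1)
          (aux_intervalIntegrable hbarint hq hmem1) ?_
        refine ae_restrict_of_ae_restrict_of_subset (Icc_subset_Icc hq.1 le_rfl) ?_
        exact hae.mono fun x hx => hx.2
      linarith
    have hQφ'int : IntegrableOn (fun q => Q q * φ' q) (Icc (0:ℝ) 1) :=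
      aux_integrable_mul hQcont hφ'int
    have hsubint : IntegrableOn (fun q => (Q q - Q₀ q) * φ' q) (Icc (0:ℝ) 1) :=
      aux_integrable_mul (hQcont.sub hQ₀cont) hφ'int
    have hint_eq : ∫ q in Icc (0:ℝ) 1, (Q q - Q₀ q) * φ' q
        = (∫ q in Icc (0:ℝ) 1, Q q * φ' q) - ∫ q in Icc (0:ℝ) 1, Q₀ q * φ' q := by
      rw [← integral_sub hQφ'int hQ₀φ'int]
      refine integral_congr_ae (Filter.Eventually.of_forall fun q => ?_)
      simp only; ring
    have hle : ∫ q in Icc (0:ℝ) 1, (Q q - Q₀ q) * φ' q ≤ 0 := by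
      rw [hint_eq, hbudgetEq]; linarith
    have hnonneg : 0 ≤ᵐ[volume.restrict (Icc (0:ℝ) 1)]
        fun q => (Q q - Q₀ q) * φ' q := by
      filter_upwards [ae_restrict_mem measurableSet_Icc, hφ'pos] with x hx hφx
      exact mul_nonneg (sub_nonneg.2 (hgpt x hx)) hφx.le
    have hzero : ∫ q in Icc (0:ℝ) 1, (Q q - Q₀ q) * φ' q = 0 :=
      le_antisymm hle (integral_nonneg_of_ae hnonneg)
    have hae0 : (fun q => (Q q - Q₀ q) * φ' q)
        =ᵐ[volume.restrict (Icc (0:ℝ) 1)] 0 :=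
      (integral_eq_zero_iff_of_nonneg_ae hnonneg hsubint).mp hzero
    have hg0 : ∀ᵐ q ∂(volume.restrict (Icc (0:ℝ) 1)), Q q - Q₀ q = 0 := by
      filter_upwards [hae0, hφ'pos] with x h1 h2
      have h1' : (Q x - Q₀ x) * φ' x = 0 := h1
      rcases mul_eq_zero.mp h1' with h | h
      · exact h
      · exact absurd h (ne_of_gt h2)
    have hfin := aux_eq_zero_of_ae_zero (hQcont.sub hQ₀cont) hg0 p hp
    have : Q p - Q₀ p = 0 := hfin
    have : Q p = Q₀ p := by linarith
    rw [this]
end
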